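/- If Traverse t s is derivable from the program clauses, then labels t = ↑s; that is, the multiset of labels of the binary tree t equals the multiset of items of the list s. -/

import Mathlib

inductive BTree (α : Type*)
  | emp : BTree α
  | bt : α → BTree α → BTree α → BTree α

def labels {α : Type*} : BTree α → Multiset α
  | BTree.emp => 0
  | BTree.bt n l r => labels l + {n} + labels r

inductive Traverse {α : Type*} : BTree α → List α → Prop
  | emp : Traverse BTree.emp []
  | leaf {n : α} {r : BTree α} {s : List α} :
      Traverse r s → Traverse (BTree.bt n BTree.emp r) (n :: s)
  | rot {m n : α} {l1 l2 r : BTree α} {s : List α} :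
      Traverse (BTree.bt m l1 (BTree.bt n l2 r)) s →
      Traverse (BTree.bt n (BTree.bt m l1 l2) r) s

namespace BTree

variable {α : Type*}

theorem labels_bt_emp (n : α) (r : BTree α) : labels (bt n emp r) = n ::ₘ labels r := by
  rw [labels, labels, zero_add, Multiset.singleton_add]

theorem labels_rotateRight (m n : α) (l1 l2 r : BTree α) :
    labels (bt n (bt m l1 l2) r) = labels (bt m l1 (bt n l2 r)) := by
  simp only [labels, add_assoc]

end BTree

theorem traverse_labels {α : Type*} {t : BTree α} {s : List α}
    (h : Traverse t s) : labels t = ↑s := by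
  induction h with
  | emp => rfl
  | leaf _ ih => rw [BTree.labels_bt_emp, ih, Multiset.cons_coe]
  | rot _ ih => rw [BTree.labels_rotateRight, ih]
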